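/- arXiv:2605.22795 — 6 statements merged into one kernel-verified Lean document; each statement's English description precedes it below -/
import Mathlib

section
/- I.i.d. local occupancy (high-probability bound of Proposition 5.2): if Y₁,…,Y_N are i.i.d. from μ with N ≥ 2 and μ(B(y, r h)) ≥ p₀ h^d for μ-a.e. y, then the probability that some i satisfies M_i(Y;h) < (p₀/4) N h^d is at most N · exp( −(p₀/16) N h^d ), where M_i(Y;h) := #{ j ∈ {1,…,N} : ‖Y_j − Y_i‖ ≤ r h } counts j = i. -/
/-!
Chernoff bound with weight `1/2` per neighbour. By independence the joint law of `(Y_j)` is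
`μ^⊗N`, so everything happens on the product space. Fix `i`; Markov's inequality gives
`P(M_i < c) ≤ 2^c E[2^{-M_i}]`. Splitting off the coordinate `i` (Tonelli), the other `N - 1`
points fall into `B(Y_i, rh)` independently, each with conditional probability `q ≥ t := p₀ h^d`,
so `E[2^{-M_i}] ≤ ∫ (1 - q(y)/2)^(N-1) dμ(y) ≤ exp(-t(N-1)/2)`. For `c = tN/4` and `N ≥ 2`,
`c log 2 - t(N-1)/2 ≤ -tN/16` because `log 2 < 0.7`. A union bound over `i` gives the factor `N`.
-/

open MeasureTheory Finset ProbabilityTheory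
open scoped ENNReal

theorem two_rpow_mul_exp_pow_le {t : ℝ} (ht : 0 ≤ t) {n : ℕ} (hn : 1 ≤ n) :
    (2 : ℝ) ^ (t * (n + 1) / 4) * Real.exp (-(t / 2)) ^ n ≤ Real.exp (-(t * (n + 1) / 16)) := by
  have hn' : (1 : ℝ) ≤ n := by exact_mod_cast hn
  have hlog := Real.log_two_lt_d9
  rw [Real.rpow_def_of_pos two_pos, ← Real.exp_nat_mul, ← Real.exp_add, Real.exp_le_exp]
  nlinarith [mul_nonneg ht (sub_nonneg.2 hn')]

theorem one_le_ofReal_two_rpow_mul_inv_two_pow {m : ℕ} {c : ℝ} (h : (m : ℝ) ≤ c) :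
    1 ≤ ENNReal.ofReal (2 ^ c) * 2⁻¹ ^ m := by
  have hpow : (2 : ℝ≥0∞) ^ m ≤ ENNReal.ofReal (2 ^ c) := by
    rw [← ENNReal.ofReal_ofNat, ← ENNReal.ofReal_pow zero_le_two, ← Real.rpow_natCast]
    exact ENNReal.ofReal_le_ofReal (Real.rpow_le_rpow_of_exponent_le one_le_two h)
  calc 1 = 2 ^ m * (2 ^ m)⁻¹ := (ENNReal.mul_inv_cancel (by simp) (by simp)).symm
    _ ≤ ENNReal.ofReal (2 ^ c) * 2⁻¹ ^ m := by rw [ENNReal.inv_pow]; gcongr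

section ProductMeasure

variable {E : Type*} [MeasurableSpace E] (μ : Measure E) [IsProbabilityMeasure μ]

theorem lintegral_pi_prod_eq_pow {ι : Type*} [Fintype ι] {g : E → ℝ≥0∞} (hg : Measurable g) :
    ∫⁻ z : ι → E, ∏ j, g (z j) ∂Measure.pi (fun _ => μ) = (∫⁻ x, g x ∂μ) ^ Fintype.card ι := by
  have hprod := lintegral_prod_eq_prod_lintegral_of_indepFun univ (fun j (z : ι → E) => g (z j))
    (iIndepFun_pi (μ := fun _ => μ) fun _ => hg.aemeasurable)
    fun j => hg.comp (measurable_pi_apply j)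
  rw [hprod]
  simp [(measurePreserving_eval (fun _ => μ) _).lintegral_comp hg]

theorem lintegral_pi_prod_apply_eq {n : ℕ} {g : E → E → ℝ≥0∞}
    (hg : Measurable (Function.uncurry g)) (i : Fin (n + 1)) :
    ∫⁻ z, ∏ j, g (z i) (z j) ∂Measure.pi (fun _ => μ) =
      ∫⁻ y, g y y * (∫⁻ x, g y x ∂μ) ^ n ∂μ := by
  rw [← ((measurePreserving_piFinSuccAbove (fun _ => μ) i).symm).lintegral_comp_emb
    (MeasurableEquiv.measurableEmbedding _)]
  simp_rw [MeasurableEquiv.piFinSuccAbove_symm_apply, Fin.prod_univ_succAbove _ i]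
  simp only [Fin.insertNthEquiv, Equiv.coe_fn_mk, Fin.insertNth_apply_same,
    Fin.insertNth_apply_succAbove]
  rw [lintegral_prod _ (by fun_prop)]
  refine lintegral_congr fun y => ?_
  have hgy : Measurable (g y) := hg.comp measurable_prodMk_left
  dsimp only
  rw [lintegral_const_mul _ (by fun_prop), lintegral_pi_prod_eq_pow μ hgy, Fintype.card_fin]

end ProductMeasure

section LocalOccupancy

variable {E : Type*} [PseudoMetricSpace E]

noncomputable def halfOnBall (s : ℝ) (y x : E) : ℝ≥0∞ := if dist x y ≤ s then 2⁻¹ else 1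

theorem prod_halfOnBall {ι : Type*} [Fintype ι] (s : ℝ) (x : ι → E) (i : ι) :
    ∏ j, halfOnBall s (x i) (x j) = 2⁻¹ ^ #{j | dist (x j) (x i) ≤ s} := by
  simp [halfOnBall, Finset.prod_ite]

variable [MeasurableSpace E] [BorelSpace E] (μ : Measure E) [IsProbabilityMeasure μ]

theorem measurable_halfOnBall [SecondCountableTopology E] (s : ℝ) :
    Measurable (Function.uncurry (halfOnBall (E := E) s)) :=
  Measurable.ite (measurableSet_le (by fun_prop) measurable_const) measurable_const measurable_const

theorem lintegral_halfOnBall_le {s t : ℝ} {y : E}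
    (h : ENNReal.ofReal t ≤ μ (Metric.closedBall y s)) :
    ∫⁻ x, halfOnBall s y x ∂μ ≤ ENNReal.ofReal (Real.exp (-(t / 2))) := by
  classical
  set B := Metric.closedBall y s
  have hB : MeasurableSet B := measurableSet_closedBall
  have hpiecewise : halfOnBall s y = B.piecewise (fun _ => 2⁻¹) (fun _ => 1) := by
    ext x; simp [halfOnBall, Set.piecewise, B, Metric.mem_closedBall]
  have ht : t ≤ (μ B).toReal := (ENNReal.ofReal_le_iff_le_toReal (measure_ne_top _ _)).1 h
  rw [hpiecewise, lintegral_piecewise hB, setLIntegral_const, setLIntegral_const, one_mul,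
    measure_compl hB (measure_ne_top _ _), measure_univ]
  calc 2⁻¹ * μ B + (1 - μ B) = ENNReal.ofReal (1 - (μ B).toReal / 2) := by
        rw [← ENNReal.ofReal_toReal (a := 2⁻¹ * μ B + (1 - μ B)) (by finiteness)]
        congr 1
        rw [ENNReal.toReal_add (by finiteness) (by finiteness), ENNReal.toReal_mul,
          ENNReal.toReal_sub_of_le prob_le_one ENNReal.one_ne_top]
        simp only [ENNReal.toReal_inv, ENNReal.toReal_ofNat, ENNReal.toReal_one]
        ring
    _ ≤ ENNReal.ofReal (Real.exp (-(t / 2))) :=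
        ENNReal.ofReal_le_ofReal (by linarith [Real.add_one_le_exp (-(t / 2))])

variable [SecondCountableTopology E] {n : ℕ} (hn : 1 ≤ n) {s t : ℝ} (ht : 0 ≤ t)
  (hμ : ∀ᵐ y ∂μ, ENNReal.ofReal t ≤ μ (Metric.closedBall y s))
include hn ht hμ

theorem measure_pi_card_dist_le_lt_le (i : Fin (n + 1)) :
    Measure.pi (fun _ => μ) {x | (#{j | dist (x j) (x i) ≤ s} : ℝ) < t * (n + 1) / 4} ≤
      ENNReal.ofReal (Real.exp (-(t * (n + 1) / 16))) := by
  set c := t * (n + 1) / 4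
  set F : (Fin (n + 1) → E) → ℝ≥0∞ := fun x => ∏ j, halfOnBall s (x i) (x j)
  have hF : Measurable F := Finset.measurable_prod _ fun j _ =>
    (measurable_halfOnBall s).comp ((measurable_pi_apply i).prodMk (measurable_pi_apply j))
  have hint : ∫⁻ x, F x ∂Measure.pi (fun _ => μ) ≤ ENNReal.ofReal (Real.exp (-(t / 2)) ^ n) :=
    calc ∫⁻ x, F x ∂Measure.pi (fun _ => μ)
        = ∫⁻ y, halfOnBall s y y * (∫⁻ x, halfOnBall s y x ∂μ) ^ n ∂μ :=
          lintegral_pi_prod_apply_eq μ (measurable_halfOnBall s) i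
      _ ≤ ∫⁻ _, 1 * ENNReal.ofReal (Real.exp (-(t / 2))) ^ n ∂μ := by
          refine lintegral_mono_ae ?_
          filter_upwards [hμ] with y hy
          have hself : halfOnBall s y y ≤ 1 := by unfold halfOnBall; split_ifs <;> simp
          gcongr
          exact lintegral_halfOnBall_le μ hy
      _ = ENNReal.ofReal (Real.exp (-(t / 2)) ^ n) := by
          rw [lintegral_const, measure_univ, mul_one, one_mul,
            ENNReal.ofReal_pow (Real.exp_nonneg _)]
  calc Measure.pi (fun _ => μ) {x | (#{j | dist (x j) (x i) ≤ s} : ℝ) < c}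
      ≤ Measure.pi (fun _ => μ) {x | 1 ≤ ENNReal.ofReal (2 ^ c) * F x} := by
        refine measure_mono fun x hx => ?_
        simp only [Set.mem_ofPred_eq, F, prod_halfOnBall]
        exact one_le_ofReal_two_rpow_mul_inv_two_pow hx.le
    _ ≤ ∫⁻ x, ENNReal.ofReal (2 ^ c) * F x ∂Measure.pi (fun _ => μ) := by
        simpa using mul_meas_ge_le_lintegral₀ (hF.const_mul _).aemeasurable 1
    _ ≤ ENNReal.ofReal (2 ^ c) * ENNReal.ofReal (Real.exp (-(t / 2)) ^ n) := by
        rw [lintegral_const_mul _ hF]; gcongr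
    _ ≤ ENNReal.ofReal (Real.exp (-(t * (n + 1) / 16))) := by
        rw [← ENNReal.ofReal_mul (by positivity)]
        exact ENNReal.ofReal_le_ofReal (two_rpow_mul_exp_pow_le ht hn)

theorem measure_pi_exists_card_dist_le_lt_le :
    Measure.pi (fun _ : Fin (n + 1) => μ)
        {x | ∃ i, (#{j | dist (x j) (x i) ≤ s} : ℝ) < t * (n + 1) / 4} ≤
      ENNReal.ofReal ((n + 1) * Real.exp (-(t * (n + 1) / 16))) := by
  rw [Set.ofPred_exists]
  calc _ ≤ ∑ i : Fin (n + 1), Measure.pi (fun _ => μ)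
          {x | (#{j | dist (x j) (x i) ≤ s} : ℝ) < t * (n + 1) / 4} :=
        measure_iUnion_fintype_le (Measure.pi fun _ => μ) _
    _ ≤ ∑ _ : Fin (n + 1), ENNReal.ofReal (Real.exp (-(t * (n + 1) / 16))) :=
        Finset.sum_le_sum fun i _ => measure_pi_card_dist_le_lt_le μ hn ht hμ i
    _ = ENNReal.ofReal ((n + 1) * Real.exp (-(t * (n + 1) / 16))) := by
        rw [Finset.sum_const, Finset.card_univ, Fintype.card_fin, nsmul_eq_mul,
          ENNReal.ofReal_mul (by positivity)]
        norm_cast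

end LocalOccupancy

theorem iid_local_occupancy_general {d : ℕ} (h r p₀ : ℝ)
    (hh : 0 < h) (hp₀ : 0 < p₀)
    {Ω : Type*} [MeasurableSpace Ω] (P : Measure Ω) [IsProbabilityMeasure P]
    (μ : Measure (EuclideanSpace ℝ (Fin d))) [IsProbabilityMeasure μ]
    (N : ℕ) (hN : 2 ≤ N) (Y : Fin N → Ω → EuclideanSpace ℝ (Fin d))
    (hmeas : ∀ i, Measurable (Y i))
    (hindep : iIndepFun Y P)
    (hid : ∀ i, Measure.map (Y i) P = μ)
    (hμ : ∀ᵐ y ∂μ, p₀ * h ^ d ≤ (μ (Metric.closedBall y (r * h))).toReal) :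
    P {ω | ∃ i, ((univ.filter fun j => ‖Y j ω - Y i ω‖ ≤ r * h).card : ℝ) <
        p₀ / 4 * N * h ^ d}
      ≤ ENNReal.ofReal ((N : ℝ) * Real.exp (-(p₀ / 16) * N * h ^ d)) := by
  obtain ⟨n, rfl⟩ : ∃ n, N = n + 1 := ⟨N - 1, by omega⟩
  have hlaw : P.map (fun ω j => Y j ω) = Measure.pi (fun _ => μ) := by
    rw [hindep.map_fun_eq_pi_map fun i => (hmeas i).aemeasurable]
    simp only [hid]
  have hμ' : ∀ᵐ y ∂μ, ENNReal.ofReal (p₀ * h ^ d) ≤ μ (Metric.closedBall y (r * h)) :=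
    hμ.mono fun y hy => ENNReal.ofReal_le_of_le_toReal hy
  have hc : p₀ / 4 * ((n + 1 : ℕ) : ℝ) * h ^ d = p₀ * h ^ d * (n + 1) / 4 := by push_cast; ring
  simp_rw [hc, ← dist_eq_norm]
  calc _ ≤ P.map (fun ω j => Y j ω)
          {x | ∃ i, (#{j | dist (x j) (x i) ≤ r * h} : ℝ) < p₀ * h ^ d * (n + 1) / 4} :=
        Measure.le_map_apply (by fun_prop) _
    _ ≤ ENNReal.ofReal ((n + 1) * Real.exp (-(p₀ * h ^ d * (n + 1) / 16))) := by
        rw [hlaw]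
        exact measure_pi_exists_card_dist_le_lt_le μ (by omega) (by positivity) hμ'
    _ = _ := by push_cast; congr 3; ring

/-- I.i.d. local occupancy (Proposition 5.2): if `Y₁,…,Y_N` are i.i.d. from `μ`
with `μ(B(y, rh)) ≥ p₀ h^d` for `μ`-a.e. `y` and `N ≥ 2`, then the probability
that some particle has fewer than `(p₀/4) N h^d` neighbors within radius `rh`
is at most `N exp(−(p₀/16) N h^d)`. -/
theorem iid_local_occupancy {d : ℕ} (h r p₀ : ℝ)
    (hh : 0 < h) (hr : 0 < r) (hp₀ : 0 < p₀)
    {Ω : Type*} [MeasurableSpace Ω] (P : Measure Ω) [IsProbabilityMeasure P]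
    (μ : Measure (EuclideanSpace ℝ (Fin d))) [IsProbabilityMeasure μ]
    (N : ℕ) (hN : 2 ≤ N) (Y : Fin N → Ω → EuclideanSpace ℝ (Fin d))
    (hmeas : ∀ i, Measurable (Y i))
    (hindep : iIndepFun Y P)
    (hid : ∀ i, Measure.map (Y i) P = μ)
    (hμ : ∀ᵐ y ∂μ, p₀ * h ^ d ≤ (μ (Metric.closedBall y (r * h))).toReal) :
    P {ω | ∃ i, ((univ.filter fun j => ‖Y j ω - Y i ω‖ ≤ r * h).card : ℝ) <
        p₀ / 4 * N * h ^ d}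
      ≤ ENNReal.ofReal ((N : ℝ) * Real.exp (-(p₀ / 16) * N * h ^ d)) :=
  iid_local_occupancy_general h r p₀ hh hp₀ P μ N hN Y hmeas hindep hid hμ
end

section
/- Expected reciprocal-KDE bound for i.i.d. particles: under the kernel lower bound K_h(u) ≥ κ h^{−d} for ‖u‖ ≤ r h and K_h(0) = K(0) h^{−d} with K(0) > 0, if Y₁,…,Y_N are i.i.d. from μ with N ≥ 2 and μ(B(y, rh)) ≥ p₀ h^d for μ-a.e. y, then E[ (1/N) ∑_{i=1}^N 1/q_Y(Y_i) ] ≤ 4/(κ p₀) + (N h^d / K(0)) · N exp( −(p₀/16) N h^d ), where q_Y(z) := (1/N) ∑_{j=1}^N K_h(z − Y_j). -/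
/-!
Every `Kh (Yᵢ - Yⱼ)` with `‖Yᵢ - Yⱼ‖ ≤ r h` is at least `κ h⁻ᵈ`, so `1 / q_Y(Yᵢ) ≤ N hᵈ / (κ cᵢ)`,
where `cᵢ ≥ 1` is the number of particles within distance `r h` of `Yᵢ`. Given `Yᵢ = y`, `cᵢ - 1`
is binomial with `N - 1` trials and success probability `μ(B(y, r h)) ≥ p₀ hᵈ =: q`. Writing
`1 / c = ∫₀¹ t ^ (c - 1) dt` and integrating the particles out first gives
`E[1 / cᵢ] ≤ ∫₀¹ (1 - (1 - t) q) ^ (N - 1) dt ≤ 1 / (N q)`, hence the expectation is at most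
`1 / (κ p₀)`.
-/

open MeasureTheory Finset ProbabilityTheory

section NeighborCount

variable {ι α : Type*} [Fintype ι] (D : α → α → Prop) [DecidableRel D]

def neighborCount (x : ι → α) (i : ι) : ℕ := #{j | D (x i) (x j)}

variable {D}

theorem one_le_neighborCount (hD : ∀ y, D y y) (x : ι → α) (i : ι) :
    1 ≤ neighborCount D x i :=
  card_pos.mpr ⟨i, mem_filter.mpr ⟨mem_univ i, hD _⟩⟩

theorem measurable_neighborCount [MeasurableSpace α]
    (hD : MeasurableSet {p : α × α | D p.1 p.2}) (i : ι) :
    Measurable fun x : ι → α => neighborCount D x i := by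
  simp only [neighborCount, card_filter]
  refine Finset.measurable_sum _ fun j _ => Measurable.ite ?_ measurable_const measurable_const
  exact hD.preimage (f := fun x : ι → α => (x i, x j)) (by fun_prop)

theorem measurable_inv_neighborCount [MeasurableSpace α]
    (hD : MeasurableSet {p : α × α | D p.1 p.2}) (i : ι) :
    Measurable fun x : ι → α => (neighborCount D x i : ℝ)⁻¹ :=
  (measurable_from_nat.comp (measurable_neighborCount hD i)).inv

theorem neighborCount_eq_card_succAbove_add_one {n : ℕ} (hD : ∀ y, D y y)
    (x : Fin (n + 1) → α) (i : Fin (n + 1)) :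
    neighborCount D x i = #{k | D (x i) (x (i.succAbove k))} + 1 := by
  simp only [neighborCount, card_filter, Fin.sum_univ_succAbove _ i, if_pos (hD _)]
  ring

theorem pow_neighborCount_sub_one {n : ℕ} (hD : ∀ y, D y y) (t : ℝ)
    (x : Fin (n + 1) → α) (i : Fin (n + 1)) :
    t ^ (neighborCount D x i - 1) = ∏ k, if D (x i) (x (i.succAbove k)) then t else 1 := by
  rw [neighborCount_eq_card_succAbove_add_one hD, Nat.add_sub_cancel, prod_ite, prod_const,
    prod_const_one, mul_one]

end NeighborCount

theorem integral_ite_eq_one_sub_mul {α : Type*} [MeasurableSpace α] (μ : Measure α)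
    [IsProbabilityMeasure μ] {p : α → Prop} [DecidablePred p] (hp : MeasurableSet {z | p z})
    (t : ℝ) :
    ∫ z, (if p z then t else 1) ∂μ = 1 - (1 - t) * μ.real {z | p z} := by
  have : (fun z => if p z then t else 1) = fun z => 1 - {z | p z}.indicator (fun _ => 1 - t) z := by
    ext z; by_cases hz : p z <;> simp [hz]
  rw [this, integral_sub (integrable_const 1) ((integrable_const _).indicator hp),
    integral_indicator_const _ hp]
  simp [mul_comm]

theorem intervalIntegral_one_sub_mul_pow_le {q : ℝ} (hq0 : 0 < q) (hq1 : q ≤ 1) (n : ℕ) :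
    ∫ t in (0 : ℝ)..1, (1 - (1 - t) * q) ^ n ≤ 1 / ((n + 1) * q) := by
  have h := intervalIntegral.integral_comp_mul_add (fun s : ℝ => s ^ n) hq0.ne' (a := 0) (b := 1)
    (1 - q)
  simp only [mul_zero, zero_add, mul_one, integral_pow, smul_eq_mul] at h
  rw [show (fun t : ℝ => (1 - (1 - t) * q) ^ n) = fun t => (q * t + (1 - q)) ^ n by
    ext t; ring, h, add_sub_cancel, one_pow]
  have hpow : 0 ≤ (1 - q) ^ (n + 1) := pow_nonneg (by linarith) _
  calc q⁻¹ * ((1 - (1 - q) ^ (n + 1)) / (n + 1)) ≤ q⁻¹ * (1 / (n + 1)) := by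
        gcongr; linarith
    _ = 1 / ((n + 1) * q) := by field_simp

theorem inv_natCast_eq_integral_pow {c : ℕ} (hc : 1 ≤ c) :
    (c : ℝ)⁻¹ = ∫ t in Set.Ioc (0 : ℝ) 1, t ^ (c - 1) := by
  rw [← intervalIntegral.integral_of_le zero_le_one, integral_pow, one_pow,
    zero_pow (Nat.succ_ne_zero _), sub_zero, one_div, Nat.cast_pred hc, sub_add_cancel]

theorem integrable_prod_comp_of_norm_le {α : Type*} [MeasurableSpace α] (μ : Measure α)
    [IsFiniteMeasure μ] {n : ℕ} {f : α → α → ℝ}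
    (hf : Measurable (Function.uncurry f)) {C : ℝ} (hfC : ∀ y z, ‖f y z‖ ≤ C) :
    Integrable (fun w : α × (Fin n → α) => ∏ k, f w.1 (w.2 k))
      (μ.prod (Measure.pi fun _ => μ)) := by
  refine .of_bound ?_ (C ^ n) (.of_forall fun w => ?_)
  · exact (Finset.measurable_prod _ fun k _ => hf.comp
      (measurable_fst.prodMk ((measurable_pi_apply k).comp measurable_snd))).aestronglyMeasurable
  · rw [norm_prod]
    exact (prod_le_prod (fun _ _ => norm_nonneg _) fun k _ => hfC _ _).trans_eq (by simp)

theorem integral_prod_succAbove_eq_integral_pow {α : Type*} [MeasurableSpace α] (μ : Measure α)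
    [IsFiniteMeasure μ] {n : ℕ} (i : Fin (n + 1)) {f : α → α → ℝ}
    (hf : Measurable (Function.uncurry f)) {C : ℝ} (hfC : ∀ y z, ‖f y z‖ ≤ C) :
    ∫ x, ∏ k, f (x i) (x (i.succAbove k)) ∂(Measure.pi fun _ => μ)
      = ∫ y, (∫ z, f y z ∂μ) ^ n ∂μ := by
  rw [← (measurePreserving_piFinSuccAbove (fun _ => μ) i).symm.integral_comp
    (MeasurableEquiv.measurableEmbedding _)]
  simp only [MeasurableEquiv.piFinSuccAbove_symm_apply, Fin.insertNthEquiv, Equiv.coe_fn_mk,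
    Fin.insertNth_apply_same, Fin.insertNth_apply_succAbove]
  rw [integral_prod _ (integrable_prod_comp_of_norm_le μ hf hfC)]
  simp_rw [integral_fintype_prod_eq_pow, Fintype.card_fin]

theorem integral_pow_neighborCount_sub_one_le {α : Type*} [MeasurableSpace α] (μ : Measure α)
    [IsProbabilityMeasure μ] {D : α → α → Prop} [DecidableRel D]
    (hDmeas : MeasurableSet {p : α × α | D p.1 p.2}) (hD : ∀ y, D y y) {q t : ℝ}
    (hq : ∀ᵐ y ∂μ, q ≤ μ.real {z | D y z}) (ht0 : 0 ≤ t) (ht1 : t ≤ 1) (n : ℕ)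
    (i : Fin (n + 1)) :
    ∫ x, t ^ (neighborCount D x i - 1) ∂(Measure.pi fun _ => μ) ≤ (1 - (1 - t) * q) ^ n := by
  have hmeas : Measurable (Function.uncurry fun y z => if D y z then t else 1) :=
    Measurable.ite hDmeas measurable_const measurable_const
  have hbound : ∀ y z, ‖if D y z then t else 1‖ ≤ 1 := fun y z => by
    split_ifs
    · rwa [Real.norm_eq_abs, abs_of_nonneg ht0]
    · rw [norm_one]
  simp_rw [pow_neighborCount_sub_one hD t]
  rw [integral_prod_succAbove_eq_integral_pow μ i hmeas hbound]
  have hinner : ∀ y, ∫ z, (if D y z then t else 1) ∂μ = 1 - (1 - t) * μ.real {z | D y z} :=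
    fun y => integral_ite_eq_one_sub_mul μ (measurable_prodMk_left hDmeas) t
  simp_rw [hinner]
  have hm1 : ∀ y, μ.real {z | D y z} ≤ 1 := fun y => measureReal_le_one
  calc ∫ y, (1 - (1 - t) * μ.real {z | D y z}) ^ n ∂μ ≤ ∫ _, (1 - (1 - t) * q) ^ n ∂μ := by
        refine integral_mono_of_nonneg (.of_forall fun y => ?_) (integrable_const _)
          (hq.mono fun y hy => ?_)
        · have := hm1 y
          exact pow_nonneg (by nlinarith) n
        · have := hm1 y
          exact pow_le_pow_left₀ (by nlinarith) (by nlinarith) n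
    _ = (1 - (1 - t) * q) ^ n := by simp

theorem integral_inv_neighborCount_le {α : Type*} [MeasurableSpace α] (μ : Measure α)
    [IsProbabilityMeasure μ] {D : α → α → Prop} [DecidableRel D]
    (hDmeas : MeasurableSet {p : α × α | D p.1 p.2}) (hD : ∀ y, D y y) {q : ℝ} (hq0 : 0 < q)
    (hq : ∀ᵐ y ∂μ, q ≤ μ.real {z | D y z}) (n : ℕ) (i : Fin (n + 1)) :
    ∫ x, (neighborCount D x i : ℝ)⁻¹ ∂(Measure.pi fun _ => μ) ≤ 1 / ((n + 1) * q) := by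
  obtain ⟨y, hy⟩ := hq.exists
  have hq1 : q ≤ 1 := hy.trans measureReal_le_one
  have hmem : ∀ᵐ t ∂(volume.restrict (Set.Ioc (0 : ℝ) 1)), t ∈ Set.Ioc (0 : ℝ) 1 :=
    ae_restrict_mem measurableSet_Ioc
  have hint : Integrable (Function.uncurry fun x (t : ℝ) => t ^ (neighborCount D x i - 1))
      ((Measure.pi fun _ => μ).prod (volume.restrict (Set.Ioc 0 1))) := by
    refine .of_bound ?_ 1 ?_
    · refine (measurable_snd.pow ?_).aestronglyMeasurable
      exact ((measurable_neighborCount hDmeas i).comp measurable_fst).sub_const 1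
    · filter_upwards [Measure.quasiMeasurePreserving_snd.ae hmem] with ⟨x, t⟩ ht
      rw [Function.uncurry_apply_pair, Real.norm_eq_abs, abs_of_nonneg (pow_nonneg ht.1.le _)]
      exact pow_le_one₀ ht.1.le ht.2
  simp_rw [inv_natCast_eq_integral_pow (one_le_neighborCount hD _ i)]
  rw [integral_integral_swap hint]
  calc ∫ t in Set.Ioc 0 1, ∫ x, t ^ (neighborCount D x i - 1) ∂(Measure.pi fun _ => μ)
      ≤ ∫ t in Set.Ioc 0 1, (1 - (1 - t) * q) ^ n :=
        integral_mono_of_nonneg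
          (hmem.mono fun t ht => integral_nonneg fun x => pow_nonneg ht.1.le _)
          (Continuous.integrableOn_Ioc (by fun_prop))
          (hmem.mono fun t ht =>
            integral_pow_neighborCount_sub_one_le μ hDmeas hD hq ht.1.le ht.2 n i)
    _ = ∫ t in (0 : ℝ)..1, (1 - (1 - t) * q) ^ n :=
        (intervalIntegral.integral_of_le zero_le_one).symm
    _ ≤ 1 / ((n + 1) * q) := intervalIntegral_one_sub_mul_pow_le hq0 hq1 n

theorem integrable_inv_neighborCount {Ω ι α : Type*} [MeasurableSpace Ω] [MeasurableSpace α]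
    [Fintype ι] {P : Measure Ω} [IsFiniteMeasure P] {D : α → α → Prop} [DecidableRel D]
    (hDmeas : MeasurableSet {p : α × α | D p.1 p.2}) {X : Ω → ι → α} (hX : Measurable X)
    (i : ι) : Integrable (fun ω => (neighborCount D (X ω) i : ℝ)⁻¹) P :=
  .of_bound ((measurable_inv_neighborCount hDmeas i).comp hX).aestronglyMeasurable 1
    (.of_forall fun ω => by
      rw [Real.norm_eq_abs, abs_of_nonneg (by positivity)]
      exact Nat.cast_inv_le_one _)

theorem ProbabilityTheory.iIndepFun.integral_inv_neighborCount_le {Ω α : Type*}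
    [MeasurableSpace Ω] [MeasurableSpace α] {P : Measure Ω} [IsProbabilityMeasure P] {μ : Measure α}
    [IsProbabilityMeasure μ] {n : ℕ} {Y : Fin (n + 1) → Ω → α} (hindep : iIndepFun Y P)
    (hmeas : ∀ i, Measurable (Y i)) (hid : ∀ i, P.map (Y i) = μ) {D : α → α → Prop}
    [DecidableRel D] (hDmeas : MeasurableSet {p : α × α | D p.1 p.2}) (hD : ∀ y, D y y)
    {q : ℝ} (hq0 : 0 < q) (hq : ∀ᵐ y ∂μ, q ≤ μ.real {z | D y z}) (i : Fin (n + 1)) :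
    ∫ ω, (neighborCount D (fun j => Y j ω) i : ℝ)⁻¹ ∂P ≤ 1 / ((n + 1) * q) := by
  have hmap : P.map (fun ω j => Y j ω) = Measure.pi fun _ => μ := by
    rw [hindep.map_fun_eq_pi_map fun i => (hmeas i).aemeasurable]
    simp_rw [hid]
  rw [← integral_map (f := fun x => (neighborCount D x i : ℝ)⁻¹)
    (measurable_pi_lambda _ hmeas).aemeasurable
    (measurable_inv_neighborCount hDmeas i).aestronglyMeasurable, hmap]
  exact _root_.integral_inv_neighborCount_le μ hDmeas hD hq0 hq n i

theorem inv_mean_le_mul_inv_card_filter {ι : Type*} [Fintype ι] {f : ι → ℝ} {p : ι → Prop}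
    [DecidablePred p] {a : ℝ} (ha : 0 < a) (hf : ∀ j, 0 ≤ f j) (hfa : ∀ j, p j → a ≤ f j)
    (hp : ∃ j, p j) :
    ((Fintype.card ι : ℝ)⁻¹ * ∑ j, f j)⁻¹ ≤ Fintype.card ι / a * (#{j | p j} : ℝ)⁻¹ := by
  obtain ⟨j₀, hj₀⟩ := hp
  have hcard : (0 : ℝ) < #{j | p j} := Nat.cast_pos.mpr (card_pos.mpr ⟨j₀, by simpa using hj₀⟩)
  have hsum : a * #{j | p j} ≤ ∑ j, f j :=
    calc a * #{j | p j} = ∑ j with p j, a := by rw [sum_const, nsmul_eq_mul, mul_comm]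
      _ ≤ ∑ j with p j, f j := sum_le_sum fun j hj => hfa j (mem_filter.mp hj).2
      _ ≤ ∑ j, f j := sum_le_sum_of_subset_of_nonneg (filter_subset _ _) fun j _ _ => hf j
  calc ((Fintype.card ι : ℝ)⁻¹ * ∑ j, f j)⁻¹ = Fintype.card ι / ∑ j, f j := by
        rw [mul_inv, inv_inv, div_eq_mul_inv]
    _ ≤ Fintype.card ι / (a * #{j | p j}) := by gcongr
    _ = Fintype.card ι / a * (#{j | p j} : ℝ)⁻¹ := by rw [div_mul_eq_div_div, div_eq_mul_inv]

theorem ProbabilityTheory.iIndepFun.integral_mean_inv_mean_le {Ω α : Type*}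
    [MeasurableSpace Ω] [MeasurableSpace α] {P : Measure Ω} [IsProbabilityMeasure P]
    {μ : Measure α} [IsProbabilityMeasure μ] {n : ℕ} {Y : Fin (n + 1) → Ω → α}
    (hindep : iIndepFun Y P) (hmeas : ∀ i, Measurable (Y i)) (hid : ∀ i, P.map (Y i) = μ)
    {D : α → α → Prop} [DecidableRel D] (hDmeas : MeasurableSet {p : α × α | D p.1 p.2})
    (hD : ∀ y, D y y) {q : ℝ} (hq0 : 0 < q) (hq : ∀ᵐ y ∂μ, q ≤ μ.real {z | D y z})
    {F : α → α → ℝ} {a : ℝ} (ha : 0 < a) (hF : ∀ y z, 0 ≤ F y z)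
    (hFa : ∀ y z, D y z → a ≤ F y z) :
    ∫ ω, ((n + 1 : ℕ) : ℝ)⁻¹ * ∑ i, (((n + 1 : ℕ) : ℝ)⁻¹ * ∑ j, F (Y i ω) (Y j ω))⁻¹ ∂P
      ≤ 1 / (a * q) := by
  set C : ℝ := (n + 1 : ℕ) / a
  have hrow : ∀ ω i, (((n + 1 : ℕ) : ℝ)⁻¹ * ∑ j, F (Y i ω) (Y j ω))⁻¹
      ≤ C * (neighborCount D (fun j => Y j ω) i : ℝ)⁻¹ := fun ω i => by
    have := inv_mean_le_mul_inv_card_filter ha (fun j => hF (Y i ω) (Y j ω))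
      (fun j => hFa (Y i ω) (Y j ω)) ⟨i, hD (Y i ω)⟩
    rwa [Fintype.card_fin] at this
  have hint : ∀ i, Integrable (fun ω => (neighborCount D (fun j => Y j ω) i : ℝ)⁻¹) P :=
    integrable_inv_neighborCount hDmeas (measurable_pi_lambda _ hmeas)
  calc ∫ ω, ((n + 1 : ℕ) : ℝ)⁻¹ * ∑ i, (((n + 1 : ℕ) : ℝ)⁻¹ * ∑ j, F (Y i ω) (Y j ω))⁻¹ ∂P
      ≤ ∫ ω, ((n + 1 : ℕ) : ℝ)⁻¹ * ∑ i, C * (neighborCount D (fun j => Y j ω) i : ℝ)⁻¹ ∂P :=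
        integral_mono_of_nonneg
          (.of_forall fun ω => mul_nonneg (by positivity) (sum_nonneg fun i _ => inv_nonneg.mpr
            (mul_nonneg (by positivity) (sum_nonneg fun j _ => hF _ _))))
          ((integrable_finsetSum _ fun i _ => (hint i).const_mul C).const_mul _)
          (.of_forall fun ω =>
            mul_le_mul_of_nonneg_left (sum_le_sum fun i _ => hrow ω i) (by positivity))
    _ = ((n + 1 : ℕ) : ℝ)⁻¹ * ∑ i, C * ∫ ω, (neighborCount D (fun j => Y j ω) i : ℝ)⁻¹ ∂P := by
        rw [integral_const_mul, integral_finsetSum _ fun i _ => (hint i).const_mul C]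
        simp_rw [integral_const_mul]
    _ ≤ ((n + 1 : ℕ) : ℝ)⁻¹ * ∑ _i : Fin (n + 1), C * (1 / ((n + 1) * q)) := by
        gcongr with i
        exact hindep.integral_inv_neighborCount_le hmeas hid hDmeas hD hq0 hq i
    _ = 1 / (a * q) := by simp [C]; field_simp

theorem expected_reciprocal_kde_iid_general {d : ℕ} (h κ r p₀ : ℝ)
    (hh : 0 < h) (hκ : 0 < κ) (hr : 0 < r) (hp₀ : 0 < p₀)
    (K : EuclideanSpace ℝ (Fin d) → ℝ) (hKnn : ∀ u, 0 ≤ K u)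
    (Kh : EuclideanSpace ℝ (Fin d) → ℝ)
    (hKh : ∀ u, Kh u = (h ^ d)⁻¹ * K (h⁻¹ • u))
    (hKlow : ∀ u, ‖u‖ ≤ r * h → κ * (h ^ d)⁻¹ ≤ Kh u)
    {Ω : Type*} [MeasurableSpace Ω] (P : Measure Ω) [IsProbabilityMeasure P]
    (μ : Measure (EuclideanSpace ℝ (Fin d))) [IsProbabilityMeasure μ]
    (N : ℕ) (Y : Fin N → Ω → EuclideanSpace ℝ (Fin d))
    (hmeas : ∀ i, Measurable (Y i))
    (hindep : iIndepFun Y P)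
    (hid : ∀ i, Measure.map (Y i) P = μ)
    (hμ : ∀ᵐ y ∂μ, p₀ * h ^ d ≤ (μ (Metric.closedBall y (r * h))).toReal) :
    ∫ ω, (N : ℝ)⁻¹ * ∑ i, ((N : ℝ)⁻¹ * ∑ j, Kh (Y i ω - Y j ω))⁻¹ ∂P
      ≤ 4 / (κ * p₀) +
        ((N : ℝ) * h ^ d / K 0) * ((N : ℝ) * Real.exp (-(p₀ / 16) * N * h ^ d)) := by
  rcases N with _ | n
  · simpa using (by positivity : 0 ≤ 4 / (κ * p₀))
  set D := fun y z : EuclideanSpace ℝ (Fin d) => ‖y - z‖ ≤ r * h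
  have hDmeas : MeasurableSet {p : _ × _ | D p.1 p.2} :=
    (isClosed_le (by fun_prop) continuous_const).measurableSet
  have hD : ∀ y, D y y := fun y => by simp only [D, sub_self, norm_zero]; positivity
  have hmass : ∀ᵐ y ∂μ, p₀ * h ^ d ≤ μ.real {z | D y z} := by
    simpa [D, Metric.closedBall, dist_eq_norm, norm_sub_rev, measureReal_def] using hμ
  have hKh0 : ∀ u, 0 ≤ Kh u := fun u => by
    have := hKnn (h⁻¹ • u)
    rw [hKh]; positivity
  calc _ ≤ 1 / (κ * (h ^ d)⁻¹ * (p₀ * h ^ d)) :=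
        hindep.integral_mean_inv_mean_le (F := fun y z => Kh (y - z)) hmeas hid hDmeas hD
          (by positivity) hmass (by positivity) (fun y z => hKh0 _) (fun y z => hKlow _)
    _ = 1 / (κ * p₀) := by field_simp
    _ ≤ _ := by
        have := hKnn 0
        exact le_add_of_le_of_nonneg (by gcongr; norm_num) (by positivity)

/-- Expected reciprocal-KDE bound for i.i.d. particles: under the kernel lower bound
`K_h ≥ κ h^{−d}` on the ball of radius `rh`, `K(0) > 0`, and the lower local mass
condition, `E[(1/N)∑ᵢ 1/q_Y(Yᵢ)] ≤ 4/(κ p₀) + (N h^d/K(0)) · N exp(−(p₀/16) N h^d)`. -/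
theorem expected_reciprocal_kde_iid {d : ℕ} (h κ r p₀ : ℝ)
    (hh : 0 < h) (hκ : 0 < κ) (hr : 0 < r) (hp₀ : 0 < p₀)
    (K : EuclideanSpace ℝ (Fin d) → ℝ) (hKnn : ∀ u, 0 ≤ K u) (hK0 : 0 < K 0)
    (Kh : EuclideanSpace ℝ (Fin d) → ℝ)
    (hKh : ∀ u, Kh u = (h ^ d)⁻¹ * K (h⁻¹ • u))
    (hKlow : ∀ u, ‖u‖ ≤ r * h → κ * (h ^ d)⁻¹ ≤ Kh u)
    {Ω : Type*} [MeasurableSpace Ω] (P : Measure Ω) [IsProbabilityMeasure P]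
    (μ : Measure (EuclideanSpace ℝ (Fin d))) [IsProbabilityMeasure μ]
    (N : ℕ) (hN : 2 ≤ N) (Y : Fin N → Ω → EuclideanSpace ℝ (Fin d))
    (hmeas : ∀ i, Measurable (Y i))
    (hindep : iIndepFun Y P)
    (hid : ∀ i, Measure.map (Y i) P = μ)
    (hμ : ∀ᵐ y ∂μ, p₀ * h ^ d ≤ (μ (Metric.closedBall y (r * h))).toReal) :
    ∫ ω, (N : ℝ)⁻¹ * ∑ i, ((N : ℝ)⁻¹ * ∑ j, Kh (Y i ω - Y j ω))⁻¹ ∂P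
      ≤ 4 / (κ * p₀) +
        ((N : ℝ) * h ^ d / K 0) * ((N : ℝ) * Real.exp (-(p₀ / 16) * N * h ^ d)) :=
  expected_reciprocal_kde_iid_general h κ r p₀ hh hκ hr hp₀ K hKnn Kh hKh hKlow P μ N Y hmeas hindep
    hid hμ
end

section
/- Trajectory-level reciprocal-KDE control from initial occupancy (Proposition 5.5): suppose the kernel satisfies K_h(u) ≥ κ h^{−d} for ‖u‖ ≤ r h, the curves X₁,…,X_N : [0,T] → ℝ^d solve Xᵢ′(t) = b(t, Xᵢ(t)) for a time-dependent field b whose spatial Lipschitz constants L(t) satisfy Γ_T := ∫₀^T L(t) dt < ∞, and the initial configuration satisfies #{ j : ‖X_j(0) − X_i(0)‖ ≤ r h e^{−Γ_T} } ≥ α N h^d e^{−d Γ_T} for every i. Then for every t ∈ [0,T], (1/N) ∑_{i=1}^N 1/q_{X(t)}(X_i(t)) ≤ e^{d Γ_T}/(κ α), where q_{X(t)}(z) := (1/N) ∑_{j=1}^N K_h(z − X_j(t)). -/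
/-!
Grönwall's inequality makes trajectories of the flow separate by at most a factor `e^Γ` on
`[0, T]`, so the particles within `r h e^{-Γ}` of `Xᵢ(0)` stay within `r h` of `Xᵢ(t)`, where the
kernel is at least `κ h^{-d}`. The occupancy hypothesis then bounds every `q_{X(t)}(Xᵢ(t))` below
by `κ α e^{-dΓ}`, and hence the mean of the reciprocals by `e^{dΓ} / (κ α)`.

As `L` is merely integrable, Grönwall's inequality is proved by cutting `[a, b]` into `n` pieces
of `L`-mass `Γ / n`: across each, `‖Y‖` grows by at most the factor `(1 - Γ / n)⁻¹`, and
`(1 - Γ / n)⁻ⁿ → e^Γ`.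
-/

open MeasureTheory Set Finset

section Gronwall

variable {E : Type*} [NormedAddCommGroup E] [NormedSpace ℝ E] {Y g : ℝ → E} {L : ℝ → ℝ}

lemma IntervalIntegrable.mono_set_Icc {a b u v : ℝ} (hL : IntervalIntegrable L volume a b)
    (hu : u ∈ Icc a b) (hv : v ∈ Icc a b) : IntervalIntegrable L volume u v :=
  hL.mono_set (uIcc_subset_uIcc (Icc_subset_uIcc hu) (Icc_subset_uIcc hv))

lemma integral_le_integral_of_mem_Icc {a b s : ℝ} (hL : ∀ t ∈ Icc a b, 0 ≤ L t)
    (hLi : IntervalIntegrable L volume a b) (hs : s ∈ Icc a b) :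
    ∫ t in a..s, L t ≤ ∫ t in a..b, L t :=
  intervalIntegral.integral_mono_interval le_rfl hs.1 hs.2
    ((ae_restrict_iff' measurableSet_Ioc).2 (.of_forall fun t ht =>
      hL t (Ioc_subset_Icc_self ht))) hLi

/-- The maximum `M` of `‖Y‖` on `[a, b]` satisfies `M ≤ ‖Y a‖ + c M`. -/
lemma norm_le_div_one_sub_of_integral_le {a b c : ℝ} (hab : a ≤ b)
    (hL : ∀ t ∈ Icc a b, 0 ≤ L t) (hLi : IntervalIntegrable L volume a b)
    (hY : ∀ t ∈ Icc a b, HasDerivAt Y (g t) t) (hg : ∀ t ∈ Icc a b, ‖g t‖ ≤ L t * ‖Y t‖)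
    (hc : c < 1) (hLc : ∫ t in a..b, L t ≤ c) :
    ‖Y b‖ ≤ ‖Y a‖ / (1 - c) := by
  obtain ⟨s₀, hs₀, hmax⟩ := isCompact_Icc.exists_isMaxOn (nonempty_Icc.2 hab)
    (continuous_norm.comp_continuousOn fun t ht => (hY t ht).continuousAt.continuousWithinAt)
  set M := ‖Y s₀‖
  have hM : ∀ s ∈ Icc a b, ‖Y s‖ ≤ M := fun s hs => hmax hs
  have hsup : ∀ s ∈ Icc a b, ‖Y s‖ ≤ ‖Y a‖ + c * M := by
    intro s hs
    have hsub : Icc a s ⊆ Icc a b := Icc_subset_Icc_right hs.2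
    have hdisp : ‖Y s - Y a‖ ≤ ∫ t in a..s, L t * M := by
      refine norm_sub_le_integral_of_norm_deriv_le_of_le hs.1
        (fun t ht => (hY t (hsub ht)).continuousAt.continuousWithinAt)
        (fun t ht => (hY t (hsub (Ioo_subset_Icc_self ht))).differentiableAt.differentiableWithinAt)
        (.of_forall fun t ht => ?_)
        ((hLi.mono_set_Icc (left_mem_Icc.2 hab) hs).mul_const M)
      have ht' := hsub (Ioo_subset_Icc_self ht)
      rw [(hY t ht').deriv]
      exact (hg t ht').trans (mul_le_mul_of_nonneg_left (hM t ht') (hL t ht'))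
    have hLs : ∫ t in a..s, L t ≤ c := (integral_le_integral_of_mem_Icc hL hLi hs).trans hLc
    calc ‖Y s‖ ≤ ‖Y a‖ + ‖Y s - Y a‖ := norm_le_insert' _ _
      _ ≤ ‖Y a‖ + (∫ t in a..s, L t) * M := by
        rw [← intervalIntegral.integral_mul_const]; gcongr
      _ ≤ ‖Y a‖ + c * M := by gcongr
  have h1c : 0 < 1 - c := sub_pos.2 hc
  calc ‖Y b‖ ≤ M := hM b (right_mem_Icc.2 hab)
    _ ≤ ‖Y a‖ / (1 - c) := by
      rw [le_div_iff₀ h1c]; linarith [hsup s₀ hs₀]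

/-- Cut `[a, s]` at a point `u` with `∫ a..u L = min (n c) (∫ a..s L)`, which exists by the
intermediate value theorem, and apply `norm_le_div_one_sub_of_integral_le` on `[u, s]`. -/
lemma norm_le_div_one_sub_pow_of_integral_le {a b c : ℝ} (hab : a ≤ b)
    (hL : ∀ t ∈ Icc a b, 0 ≤ L t) (hLi : IntervalIntegrable L volume a b)
    (hY : ∀ t ∈ Icc a b, HasDerivAt Y (g t) t) (hg : ∀ t ∈ Icc a b, ‖g t‖ ≤ L t * ‖Y t‖)
    (hc₀ : 0 ≤ c) (hc : c < 1) (n : ℕ) :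
    ∀ s ∈ Icc a b, ∫ t in a..s, L t ≤ n * c → ‖Y s‖ ≤ ‖Y a‖ / (1 - c) ^ n := by
  have ha : a ∈ Icc a b := left_mem_Icc.2 hab
  have piece : ∀ {u s c : ℝ}, u ∈ Icc a b → s ∈ Icc a b → u ≤ s → c < 1 →
      ∫ t in u..s, L t ≤ c → ‖Y s‖ ≤ ‖Y u‖ / (1 - c) := fun hu hs hus hc hLc =>
    have hsub : Set.Icc _ _ ⊆ Icc a b := Icc_subset_Icc hu.1 hs.2
    norm_le_div_one_sub_of_integral_le hus (fun t ht => hL t (hsub ht))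
      (hLi.mono_set_Icc hu hs) (fun t ht => hY t (hsub ht)) (fun t ht => hg t (hsub ht)) hc hLc
  induction n with
  | zero =>
    intro s hs hLs
    simpa using piece ha hs hs.1 zero_lt_one (by simpa using hLs)
  | succ n ih =>
    intro s hs hLs
    set A : ℝ → ℝ := fun s => ∫ t in a..s, L t
    have hA : ContinuousOn A (Icc a s) :=
      (intervalIntegral.continuousOn_primitive_interval' hLi left_mem_uIcc).mono
        (uIcc_of_le hab ▸ Icc_subset_Icc_right hs.2)
    have hAs : 0 ≤ A s := intervalIntegral.integral_nonneg hs.1 fun t ht =>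
      hL t (Icc_subset_Icc_right hs.2 ht)
    obtain ⟨u, hu, hAu⟩ : min (n * c) (A s) ∈ A '' Icc a s :=
      intermediate_value_Icc hs.1 hA
        ⟨by simpa [A] using le_min (by positivity) hAs, min_le_right _ _⟩
    have hu' : u ∈ Icc a b := Icc_subset_Icc_right hs.2 hu
    have hLus : ∫ t in u..s, L t ≤ c := by
      rw [← intervalIntegral.integral_interval_sub_left (hLi.mono_set_Icc ha hs)
        (hLi.mono_set_Icc ha hu')]
      change A s - A u ≤ c
      push_cast at hLs
      rw [hAu]
      rcases min_cases (n * c) (A s) with h | h <;> rw [h.1] <;> linarith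
    calc ‖Y s‖ ≤ ‖Y u‖ / (1 - c) := piece hu' hs hu.2 hc hLus
      _ ≤ ‖Y a‖ / (1 - c) ^ n / (1 - c) := div_le_div_of_nonneg_right
        (ih u hu' (hAu.trans_le (min_le_left _ _))) (by linarith)
      _ = ‖Y a‖ / (1 - c) ^ (n + 1) := by rw [pow_succ, div_div]

theorem norm_le_mul_exp_integral_of_norm_deriv_le {a b : ℝ} (hab : a ≤ b)
    (hL : ∀ t ∈ Icc a b, 0 ≤ L t) (hLi : IntervalIntegrable L volume a b)
    (hY : ∀ t ∈ Icc a b, HasDerivAt Y (g t) t) (hg : ∀ t ∈ Icc a b, ‖g t‖ ≤ L t * ‖Y t‖) :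
    ‖Y b‖ ≤ ‖Y a‖ * Real.exp (∫ t in a..b, L t) := by
  set Γ := ∫ t in a..b, L t
  have hΓ : 0 ≤ Γ := intervalIntegral.integral_nonneg hab hL
  have hlim : Filter.Tendsto (fun n : ℕ => ‖Y a‖ / (1 - Γ / n) ^ n) Filter.atTop
      (nhds (‖Y a‖ * Real.exp Γ)) := by
    have : Filter.Tendsto (fun n : ℕ => ‖Y a‖ / (1 + -Γ / n) ^ n) Filter.atTop
        (nhds (‖Y a‖ / Real.exp (-Γ))) :=
      tendsto_const_nhds.div (Real.tendsto_one_add_div_pow_exp (-Γ)) (Real.exp_ne_zero _)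
    simpa only [neg_div, ← sub_eq_add_neg, Real.exp_neg, div_inv_eq_mul] using this
  refine ge_of_tendsto hlim ?_
  filter_upwards [Filter.eventually_gt_atTop ⌈Γ⌉₊] with n hn
  have hn : Γ < n := Nat.lt_of_ceil_lt hn
  have hn₀ : (0 : ℝ) < n := hΓ.trans_lt hn
  refine norm_le_div_one_sub_pow_of_integral_le hab hL hLi hY hg (by positivity)
    ((div_lt_one hn₀).2 hn) n b (right_mem_Icc.2 hab) ?_
  rw [mul_div_cancel₀ _ hn₀.ne']

theorem norm_sub_le_mul_exp_integral_of_lipschitz {f : ℝ → E → E} {X X' : ℝ → E} {a b t : ℝ}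
    (hL : ∀ s ∈ Icc a b, 0 ≤ L s) (hLi : IntervalIntegrable L volume a b)
    (hf : ∀ s ∈ Icc a b, ∀ z z', ‖f s z - f s z'‖ ≤ L s * ‖z - z'‖)
    (hX : ∀ s ∈ Icc a b, HasDerivAt X (f s (X s)) s)
    (hX' : ∀ s ∈ Icc a b, HasDerivAt X' (f s (X' s)) s) (ht : t ∈ Icc a b) :
    ‖X t - X' t‖ ≤ ‖X a - X' a‖ * Real.exp (∫ s in a..b, L s) := by
  have hsub : Icc a t ⊆ Icc a b := Icc_subset_Icc_right ht.2
  calc ‖X t - X' t‖ ≤ ‖X a - X' a‖ * Real.exp (∫ s in a..t, L s) :=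
        norm_le_mul_exp_integral_of_norm_deriv_le ht.1 (fun s hs => hL s (hsub hs))
          (hLi.mono_set_Icc (left_mem_Icc.2 (ht.1.trans ht.2)) ht)
          (fun s hs => (hX s (hsub hs)).sub (hX' s (hsub hs))) fun s hs => hf s (hsub hs) _ _
    _ ≤ ‖X a - X' a‖ * Real.exp (∫ s in a..b, L s) := by
        gcongr
        exact integral_le_integral_of_mem_Icc hL hLi ht

end Gronwall

lemma card_filter_mul_le_sum {ι : Type*} [Fintype ι] {w : ι → ℝ} (hw : ∀ j, 0 ≤ w j)
    {p : ι → Prop} [DecidablePred p] {m : ℝ} (hm : ∀ j, p j → m ≤ w j) :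
    #{j | p j} * m ≤ ∑ j, w j :=
  calc #{j | p j} * m = #{j | p j} • m := (nsmul_eq_mul _ _).symm
    _ ≤ ∑ j ∈ {j | p j}, w j := card_nsmul_le_sum _ _ _ fun j hj => hm j (mem_filter.1 hj).2
    _ ≤ ∑ j, w j := sum_le_sum_of_subset_of_nonneg (subset_univ _) fun j _ _ => hw j

lemma inv_card_mul_sum_inv_le {ι : Type*} [Fintype ι] {q : ι → ℝ} {m : ℝ} (hm : 0 < m)
    (hq : ∀ i, m ≤ q i) : (Fintype.card ι : ℝ)⁻¹ * ∑ i, (q i)⁻¹ ≤ m⁻¹ :=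
  calc (Fintype.card ι : ℝ)⁻¹ * ∑ i, (q i)⁻¹
      ≤ (Fintype.card ι : ℝ)⁻¹ * (Fintype.card ι * m⁻¹) := by
        gcongr
        simpa using sum_le_card_nsmul univ (fun i => (q i)⁻¹) m⁻¹ fun i _ => inv_anti₀ hm (hq i)
    _ ≤ m⁻¹ := by
        rw [← mul_assoc]
        exact mul_le_of_le_one_left (inv_nonneg.2 hm.le) inv_mul_le_one

theorem trajectory_reciprocal_kde_control_general {d : ℕ} (h κ r α T : ℝ)
    (hh : 0 < h) (hκ : 0 < κ) (hα : 0 < α)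
    (Kh : EuclideanSpace ℝ (Fin d) → ℝ) (hKnn : ∀ u, 0 ≤ Kh u)
    (hKlow : ∀ u, ‖u‖ ≤ r * h → κ * (h ^ d)⁻¹ ≤ Kh u)
    (b : ℝ → EuclideanSpace ℝ (Fin d) → EuclideanSpace ℝ (Fin d))
    (L : ℝ → ℝ) (hLnn : ∀ t, 0 ≤ L t)
    (hLint : IntervalIntegrable L volume 0 T)
    (hLip : ∀ t ∈ Icc (0 : ℝ) T, ∀ z z', ‖b t z - b t z'‖ ≤ L t * ‖z - z'‖)
    (Γ : ℝ) (hΓ : Γ = ∫ s in (0 : ℝ)..T, L s)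
    (N : ℕ) (X : Fin N → ℝ → EuclideanSpace ℝ (Fin d))
    (hX : ∀ i, ∀ t ∈ Icc (0 : ℝ) T, HasDerivAt (X i) (b t (X i t)) t)
    (hocc : ∀ i, α * N * h ^ d * Real.exp (-(d : ℝ) * Γ) ≤
      ((univ.filter fun j => ‖X j 0 - X i 0‖ ≤ r * h * Real.exp (-Γ)).card : ℝ)) :
    ∀ t ∈ Icc (0 : ℝ) T,
      (N : ℝ)⁻¹ * ∑ i, ((N : ℝ)⁻¹ * ∑ j, Kh (X i t - X j t))⁻¹
        ≤ Real.exp ((d : ℝ) * Γ) / (κ * α) := by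
  intro t ht
  have hnear : ∀ i j, ‖X j 0 - X i 0‖ ≤ r * h * Real.exp (-Γ) →
      κ * (h ^ d)⁻¹ ≤ Kh (X i t - X j t) := by
    intro i j hij
    apply hKlow
    calc ‖X i t - X j t‖ ≤ ‖X j 0 - X i 0‖ * Real.exp Γ := by
          rw [hΓ, norm_sub_rev (X j 0)]
          exact norm_sub_le_mul_exp_integral_of_lipschitz (fun s _ => hLnn s) hLint hLip
            (hX i) (hX j) ht
      _ ≤ r * h * Real.exp (-Γ) * Real.exp Γ := by gcongr
      _ = r * h := by rw [mul_assoc, ← Real.exp_add, neg_add_cancel, Real.exp_zero, mul_one]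
  have hq : ∀ i, κ * α * Real.exp (-(d : ℝ) * Γ) ≤ (N : ℝ)⁻¹ * ∑ j, Kh (X i t - X j t) := by
    intro i
    have hN : (N : ℝ) ≠ 0 := Nat.cast_ne_zero.2 (Fin.pos i).ne'
    calc κ * α * Real.exp (-(d : ℝ) * Γ)
        = (N : ℝ)⁻¹ * (α * N * h ^ d * Real.exp (-(d : ℝ) * Γ) * (κ * (h ^ d)⁻¹)) := by
          field_simp
      _ ≤ (N : ℝ)⁻¹ * ∑ j, Kh (X i t - X j t) := by
          gcongr
          exact (mul_le_mul_of_nonneg_right (hocc i) (by positivity)).trans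
            (card_filter_mul_le_sum (fun j => hKnn _) (hnear i))
  calc (N : ℝ)⁻¹ * ∑ i, ((N : ℝ)⁻¹ * ∑ j, Kh (X i t - X j t))⁻¹
      ≤ (κ * α * Real.exp (-(d : ℝ) * Γ))⁻¹ := by
        simpa using inv_card_mul_sum_inv_le (by positivity) hq
    _ = Real.exp ((d : ℝ) * Γ) / (κ * α) := by
        rw [neg_mul, Real.exp_neg]; field_simp

/-- Trajectory-level reciprocal-KDE control from initial occupancy (Proposition 5.5):
under the kernel lower bound and initial occupancy at the shrunken radius
`r h e^{−Γ_T}` with count `≥ α N h^d e^{−d Γ_T}`, along the flow one has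
`(1/N) ∑ᵢ 1/q_{X(t)}(Xᵢ(t)) ≤ e^{d Γ_T}/(κ α)` for all `t ∈ [0,T]`. -/
theorem trajectory_reciprocal_kde_control {d : ℕ} (h κ r α T : ℝ)
    (hh : 0 < h) (hκ : 0 < κ) (hr : 0 < r) (hα : 0 < α) (hT : 0 < T)
    (Kh : EuclideanSpace ℝ (Fin d) → ℝ) (hKnn : ∀ u, 0 ≤ Kh u)
    (hKlow : ∀ u, ‖u‖ ≤ r * h → κ * (h ^ d)⁻¹ ≤ Kh u)
    (b : ℝ → EuclideanSpace ℝ (Fin d) → EuclideanSpace ℝ (Fin d))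
    (L : ℝ → ℝ) (hLnn : ∀ t, 0 ≤ L t)
    (hLint : IntervalIntegrable L volume 0 T)
    (hLip : ∀ t ∈ Icc (0 : ℝ) T, ∀ z z', ‖b t z - b t z'‖ ≤ L t * ‖z - z'‖)
    (Γ : ℝ) (hΓ : Γ = ∫ s in (0 : ℝ)..T, L s)
    (N : ℕ) (hN : 0 < N) (X : Fin N → ℝ → EuclideanSpace ℝ (Fin d))
    (hX : ∀ i, ∀ t ∈ Icc (0 : ℝ) T, HasDerivAt (X i) (b t (X i t)) t)
    (hocc : ∀ i, α * N * h ^ d * Real.exp (-(d : ℝ) * Γ) ≤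
      ((univ.filter fun j => ‖X j 0 - X i 0‖ ≤ r * h * Real.exp (-Γ)).card : ℝ)) :
    ∀ t ∈ Icc (0 : ℝ) T,
      (N : ℝ)⁻¹ * ∑ i, ((N : ℝ)⁻¹ * ∑ j, Kh (X i t - X j t))⁻¹
        ≤ Real.exp ((d : ℝ) * Γ) / (κ * α) :=
  trajectory_reciprocal_kde_control_general h κ r α T hh hκ hα Kh hKnn hKlow b L hLnn hLint hLip Γ
    hΓ N X hX hocc
end

section
/- Self-interaction divergence identity (core computation in Theorem 3.1): fix i and the other centers x_j (j ≠ i), and define Φ : ℝ^d → ℝ^d by Φ(w) := ∇_z log( (1/N)[ K_h(z − w) + ∑_{j≠i} K_h(z − x_j) ] ) evaluated at z = w. Then the divergence of Φ at w = x_i equals (div_z s_x)(x_i) − Δ K_h(0) / ( N · q_x(x_i) ), where q_x(z) := (1/N) ∑_{j=1}^N K_h(z − x_j) and s_x := ∇ log q_x. -/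
/-!
Since `K_h` is even, `∇K_h(0) = 0`, so a kernel centred at `w` does not contribute to the
gradient at `w`: `Φ = ∇ log p` with `p(w) = N⁻¹ (K_h(0) + ∑_{j≠i} K_h(w − x_j))`, while
`s_x = ∇ log q`. The functions `p` and `q` agree to first order at `x_i`, and
`Δq(x_i) − Δp(x_i) = N⁻¹ ΔK_h(0)`. As `Δ log f = Δf / f − |∇f|² / f²` only involves the
2-jet of `f`, the two divergences differ by `N⁻¹ ΔK_h(0) / q(x_i)`.
-/

open MeasureTheory Finset

/-- Divergence of a vector field on `ℝ^d`. -/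
noncomputable def vdiv {d : ℕ} (f : EuclideanSpace ℝ (Fin d) → EuclideanSpace ℝ (Fin d))
    (x : EuclideanSpace ℝ (Fin d)) : ℝ :=
  ∑ i : Fin d, fderiv ℝ f x (EuclideanSpace.single i 1) i

/-- Laplacian of a scalar field on `ℝ^d`. -/
noncomputable def Lap {d : ℕ} (f : EuclideanSpace ℝ (Fin d) → ℝ)
    (x : EuclideanSpace ℝ (Fin d)) : ℝ :=
  ∑ i : Fin d,
    fderiv ℝ (fun w => fderiv ℝ f w (EuclideanSpace.single i 1)) x (EuclideanSpace.single i 1)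

section Calculus

variable {E F : Type*} [NormedAddCommGroup E] [NormedSpace ℝ E]
  [NormedAddCommGroup F] [NormedSpace ℝ F]

theorem Function.Even.fderiv_zero {f : E → F} (hf : f.Even) : fderiv ℝ f 0 = 0 := by
  by_cases hd : DifferentiableAt ℝ f 0
  · have hneg : HasFDerivAt f (-fderiv ℝ f 0) 0 := by
      have := (neg_zero (G := E) ▸ hd.hasFDerivAt).comp (0 : E) (hasFDerivAt_id (0 : E)).neg
      simpa [Function.comp_def, funext hf] using this
    have hdouble : (2 : ℝ) • fderiv ℝ f 0 = 0 := by
      rw [two_smul]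
      nth_rewrite 1 [← hneg.unique hd.hasFDerivAt]
      exact neg_add_cancel _
    exact (smul_eq_zero.mp hdouble).resolve_left two_ne_zero
  · exact fderiv_zero_of_not_differentiableAt hd

theorem Function.Even.hasFDerivAt_comp_sub_self {K : E → F} (hK : K.Even)
    (hK0 : DifferentiableAt ℝ K 0) (a : E) :
    HasFDerivAt (fun z => K (z - a)) (0 : E →L[ℝ] F) a := by
  rw [hasFDerivAt_comp_sub, sub_self, ← hK.fderiv_zero]
  exact hK0.hasFDerivAt

theorem ContDiff.differentiable_fderiv_apply {f : E → F} (hf : ContDiff ℝ 2 f) (v : E) :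
    Differentiable ℝ (fun w => fderiv ℝ f w v) :=
  ((hf.fderiv_right (m := 1) (by norm_num)).differentiable one_ne_zero).clm_apply
    (differentiable_const v)

theorem hasFDerivAt_const_mul_add_of_hasFDerivAt_zero {u R : E → ℝ} {a : E}
    (hu : HasFDerivAt u (0 : E →L[ℝ] ℝ) a) (hR : DifferentiableAt ℝ R a) (c : ℝ) :
    HasFDerivAt (fun z => c * (u z + R z)) (c • fderiv ℝ R a) a := by
  simpa using (hu.add hR.hasFDerivAt).const_mul c

end Calculus

section Gradient

variable {E : Type*} [NormedAddCommGroup E] [InnerProductSpace ℝ E] [CompleteSpace E]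
  {f g : E → ℝ} {a : E}

theorem ContDiff.differentiable_gradient (hf : ContDiff ℝ 2 f) :
    Differentiable ℝ (gradient f) :=
  (InnerProductSpace.toDual ℝ E).symm.differentiable.comp
    ((hf.fderiv_right (m := 1) (by norm_num)).differentiable one_ne_zero)

theorem gradient_log_congr {L : E →L[ℝ] ℝ} (hf : HasFDerivAt f L a) (hg : HasFDerivAt g L a)
    (hfg : f a = g a) (hf0 : f a ≠ 0) :
    gradient (fun z => Real.log (f z)) a = gradient (fun z => Real.log (g z)) a := by
  rw [gradient, gradient, (hf.log hf0).fderiv, (hg.log (hfg ▸ hf0)).fderiv, hfg]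

end Gradient

section Euclidean

variable {d : ℕ} {f g : EuclideanSpace ℝ (Fin d) → ℝ} {x : EuclideanSpace ℝ (Fin d)}

theorem gradient_apply_single (f : EuclideanSpace ℝ (Fin d) → ℝ) (z : EuclideanSpace ℝ (Fin d))
    (k : Fin d) : gradient f z k = fderiv ℝ f z (EuclideanSpace.single k 1) := by
  rw [← inner_gradient_left, EuclideanSpace.inner_single_right]
  simp

theorem vdiv_gradient (hf : DifferentiableAt ℝ (gradient f) x) :
    vdiv (gradient f) x = Lap f x := by
  refine Finset.sum_congr rfl fun k _ => ?_
  rw [← funext (gradient_apply_single f · k)]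
  exact (DFunLike.congr_fun
    ((EuclideanSpace.proj k).hasFDerivAt.comp x hf.hasFDerivAt).fderiv _).symm

theorem Lap_const_mul (c : ℝ) : Lap (fun z => c * f z) x = c * Lap f x := by
  simp only [Lap, Finset.mul_sum]
  refine Finset.sum_congr rfl fun k _ => ?_
  have hf : fderiv ℝ (fun z => c * f z) = c • fderiv ℝ f := fderiv_const_smul_field (f := f) c
  rw [hf]
  exact DFunLike.congr_fun (congrFun (fderiv_const_smul_field (𝕜 := ℝ)
    (f := fun w => fderiv ℝ f w (EuclideanSpace.single k 1)) c) x) _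

theorem Lap_const_add (c : ℝ) : Lap (fun z => c + f z) x = Lap f x := by
  simp only [Lap, fderiv_const_add]

theorem Lap_comp_sub (b : EuclideanSpace ℝ (Fin d)) :
    Lap (fun z => f (z - b)) x = Lap f (x - b) := by
  simp only [Lap, fderiv_comp_sub]
  exact Finset.sum_congr rfl fun k _ => DFunLike.congr_fun (fderiv_comp_sub (𝕜 := ℝ) (x := x)
    (f := fun w => fderiv ℝ f w (EuclideanSpace.single k 1)) b) _

theorem Lap_add (hf : ContDiff ℝ 2 f) (hg : ContDiff ℝ 2 g) :
    Lap (fun z => f z + g z) x = Lap f x + Lap g x := by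
  simp only [Lap, ← Finset.sum_add_distrib]
  refine Finset.sum_congr rfl fun k _ => ?_
  set v : EuclideanSpace ℝ (Fin d) := EuclideanSpace.single k 1
  have hfg : (fun w => fderiv ℝ (fun z => f z + g z) w v) =
      fun w => fderiv ℝ f w v + fderiv ℝ g w v := by
    ext w
    rw [fderiv_fun_add (hf.differentiable two_ne_zero w) (hg.differentiable two_ne_zero w)]
    rfl
  rw [hfg, fderiv_fun_add (hf.differentiable_fderiv_apply v x)
    (hg.differentiable_fderiv_apply v x)]
  rfl

theorem Lap_log (hf : ContDiff ℝ 2 f) (hf0 : ∀ z, f z ≠ 0) :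
    Lap (fun z => Real.log (f z)) x =
      Lap f x / f x - ∑ k, (fderiv ℝ f x (EuclideanSpace.single k 1) / f x) ^ 2 := by
  rw [Lap, Lap, Finset.sum_div, ← Finset.sum_sub_distrib]
  refine Finset.sum_congr rfl fun k _ => ?_
  set v : EuclideanSpace ℝ (Fin d) := EuclideanSpace.single k 1
  have hlog : (fun w => fderiv ℝ (fun z => Real.log (f z)) w v) =
      fun w => (f w)⁻¹ * fderiv ℝ f w v := by
    ext w
    rw [fderiv.log (hf.differentiable two_ne_zero w) (hf0 w)]
    rfl
  have hinv : HasFDerivAt (fun w => (f w)⁻¹) (-(f x ^ 2)⁻¹ • fderiv ℝ f x) x :=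
    (hasDerivAt_inv (hf0 x)).comp_hasFDerivAt x (hf.differentiable two_ne_zero x).hasFDerivAt
  rw [hlog, (hinv.fun_mul (hf.differentiable_fderiv_apply v x).hasFDerivAt).fderiv]
  simp only [neg_smul, add_apply, smul_apply, neg_apply, smul_eq_mul]
  field_simp
  ring

end Euclidean

section Translate

variable {d : ℕ} {K R : EuclideanSpace ℝ (Fin d) → ℝ} {c : ℝ} {a : EuclideanSpace ℝ (Fin d)}

theorem gradient_log_const_mul_translate_add (hK : K.Even) (hK0 : DifferentiableAt ℝ K 0)
    (hR : DifferentiableAt ℝ R a) (h0 : c * (K 0 + R a) ≠ 0) :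
    gradient (fun z => Real.log (c * (K (z - a) + R z))) a =
      gradient (fun z => Real.log (c * (K 0 + R z))) a :=
  gradient_log_congr
    (hasFDerivAt_const_mul_add_of_hasFDerivAt_zero (hK.hasFDerivAt_comp_sub_self hK0 a) hR c)
    (hasFDerivAt_const_mul_add_of_hasFDerivAt_zero (hasFDerivAt_const _ a) hR c)
    (by rw [sub_self]) (by rwa [sub_self])

theorem Lap_log_const_mul_translate_add (hK : K.Even) (hK2 : ContDiff ℝ 2 K)
    (hR2 : ContDiff ℝ 2 R) (hf0 : ∀ z, c * (K (z - a) + R z) ≠ 0)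
    (hg0 : ∀ z, c * (K 0 + R z) ≠ 0) :
    Lap (fun z => Real.log (c * (K (z - a) + R z))) a =
      Lap (fun z => Real.log (c * (K 0 + R z))) a + c * Lap K 0 / (c * (K 0 + R a)) := by
  have hKa : ContDiff ℝ 2 (fun z => K (z - a)) := hK2.comp (contDiff_id.sub contDiff_const)
  have hR := hR2.differentiable two_ne_zero a
  have hdf := (hasFDerivAt_const_mul_add_of_hasFDerivAt_zero
    (hK.hasFDerivAt_comp_sub_self (hK2.differentiable two_ne_zero 0) a) hR c).fderiv
  have hdg :=
    (hasFDerivAt_const_mul_add_of_hasFDerivAt_zero (hasFDerivAt_const (K 0) a) hR c).fderiv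
  rw [Lap_log (contDiff_const.mul (hKa.add hR2)) hf0,
    Lap_log (contDiff_const.mul (contDiff_const.add hR2)) hg0, hdf, hdg, Lap_const_mul,
    Lap_const_mul, Lap_add hKa hR2, Lap_const_add, Lap_comp_sub, sub_self]
  have hga := hg0 a
  field_simp
  ring

end Translate

/-- Self-interaction divergence identity (core computation in Theorem 3.1): with
`Φ(w)` the KDE score with the `i`-th center replaced by `w` and evaluated at `w`,
`div Φ (xᵢ) = (div_z s_x)(xᵢ) − Δ K_h(0)/(N q_x(xᵢ))`. -/
theorem self_interaction_divergence_identity {d : ℕ}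
    (Kh : EuclideanSpace ℝ (Fin d) → ℝ)
    (hKpos : ∀ u, 0 < Kh u) (hKeven : ∀ u, Kh (-u) = Kh u) (hKC2 : ContDiff ℝ 2 Kh)
    (N : ℕ) (hN : 0 < N) (x : Fin N → EuclideanSpace ℝ (Fin d)) (i : Fin N)
    (q : EuclideanSpace ℝ (Fin d) → ℝ)
    (hq : ∀ z, q z = (N : ℝ)⁻¹ * ∑ j, Kh (z - x j))
    (sx : EuclideanSpace ℝ (Fin d) → EuclideanSpace ℝ (Fin d))
    (hsx : ∀ z, sx z = gradient (fun w => Real.log (q w)) z)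
    (Φ : EuclideanSpace ℝ (Fin d) → EuclideanSpace ℝ (Fin d))
    (hΦ : ∀ w, Φ w = gradient (fun z => Real.log ((N : ℝ)⁻¹ *
      (Kh (z - w) + ∑ j ∈ univ.erase i, Kh (z - x j)))) w) :
    vdiv Φ (x i) = vdiv sx (x i) - Lap Kh 0 / (N * q (x i)) := by
  set R : EuclideanSpace ℝ (Fin d) → ℝ := fun z => ∑ j ∈ univ.erase i, Kh (z - x j)
  have hKshift : ∀ b, ContDiff ℝ 2 (fun z => Kh (z - b)) := fun b =>
    hKC2.comp (contDiff_id.sub contDiff_const)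
  have hR2 : ContDiff ℝ 2 R := ContDiff.sum fun j _ => hKshift (x j)
  have hpos : ∀ t z, 0 < t → 0 < (N : ℝ)⁻¹ * (t + R z) := fun t z ht => by
    have : 0 ≤ R z := Finset.sum_nonneg fun j _ => (hKpos _).le
    positivity
  have hq_split : q = fun z => (N : ℝ)⁻¹ * (Kh (z - x i) + R z) := by
    funext z
    rw [hq, ← Finset.add_sum_erase _ _ (mem_univ i)]
  have hΦ' : Φ = gradient (fun z => Real.log ((N : ℝ)⁻¹ * (Kh 0 + R z))) := funext fun w =>
    (hΦ w).trans (gradient_log_const_mul_translate_add hKeven (hKC2.differentiable two_ne_zero 0)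
      (hR2.differentiable two_ne_zero w) (hpos _ w (hKpos 0)).ne')
  have hsx' : sx = gradient (fun z => Real.log ((N : ℝ)⁻¹ * (Kh (z - x i) + R z))) :=
    funext fun z => by rw [hsx, hq_split]
  have hqa : q (x i) = (N : ℝ)⁻¹ * (Kh 0 + R (x i)) := by simp only [hq_split, sub_self]
  have hlog_p := (contDiff_const.mul (contDiff_const.add hR2)).log
    fun z => (hpos _ z (hKpos 0)).ne'
  have hlog_q := (contDiff_const.mul ((hKshift (x i)).add hR2)).log
    fun z => (hpos _ z (hKpos _)).ne'
  rw [hΦ', hsx', vdiv_gradient (hlog_p.differentiable_gradient _),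
    vdiv_gradient (hlog_q.differentiable_gradient _), hqa,
    Lap_log_const_mul_translate_add hKeven hKC2 hR2 (fun z => (hpos _ z (hKpos _)).ne')
      (fun z => (hpos _ z (hKpos _)).ne')]
  field_simp
  ring
end

section
/- Gradient of the sharp Laplace companion kernel: for the Laplace kernel K_h(u) = c h^{−d} exp(−‖u‖/h) and its companion L_h(u) := h(‖u‖ + h) K_h(u), the function L_h is differentiable at every u ∈ ℝ^d (including u = 0) with gradient ∇L_h(u) = −u · K_h(u). -/
/-!
Both kernels are radial: `L_h(u) = g(‖u‖)` with `g(t) = h (t + h) C e^{-t/h}` and `C = c h^{-d}`, and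
`g'(t) = -t C e^{-t/h}`. A radial function `g ∘ ‖·‖` whose profile satisfies `g'(t) = t a` has gradient
`a • u` at `u`: away from the origin by the chain rule with `∇‖u‖ = u / ‖u‖`, and at the origin because
`g'(0) = 0` makes `g(‖v‖) - g(0) = o(‖v‖)` although the norm itself is not differentiable there.
-/

open Real Asymptotics InnerProductSpace Topology

section Radial

variable {E : Type*} [NormedAddCommGroup E] [InnerProductSpace ℝ E]

theorem hasFDerivAt_norm_of_ne_zero {x : E} (hx : x ≠ 0) :
    HasFDerivAt (‖·‖) (‖x‖⁻¹ • innerSL ℝ x) x := by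
  have hsqrt : HasFDerivAt (fun v : E => √(‖v‖ ^ 2))
      ((1 / (2 * √(‖x‖ ^ 2))) • (2 • innerSL ℝ x)) x :=
    (hasDerivAt_sqrt (by positivity)).comp_hasFDerivAt x (hasStrictFDerivAt_norm_sq x).hasFDerivAt
  convert hsqrt using 1
  · simp only [sqrt_sq (norm_nonneg _)]
  · ext y
    simp only [sqrt_sq (norm_nonneg x), smul_apply, smul_eq_mul, nsmul_eq_mul,
      Nat.cast_ofNat]
    field_simp

theorem hasFDerivAt_comp_norm_zero {g : ℝ → ℝ} (hg : HasDerivAt g 0 0) :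
    HasFDerivAt (fun v : E => g ‖v‖) (0 : E →L[ℝ] ℝ) 0 := by
  rw [hasDerivAt_iff_isLittleO_nhds_zero] at hg
  have hnorm : Filter.Tendsto (‖·‖) (𝓝 (0 : E)) (𝓝 0) := by
    simpa using (continuous_norm (E := E)).tendsto 0
  have := hg.comp_tendsto hnorm
  simp only [zero_add, smul_zero, sub_zero, Function.comp_def] at this
  rw [hasFDerivAt_iff_isLittleO_nhds_zero]
  simpa only [zero_add, norm_zero, zero_apply, sub_zero] using isLittleO_norm_right.mp this

theorem hasGradientAt_comp_norm [CompleteSpace E] {g : ℝ → ℝ} {a : ℝ} {u : E}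
    (hg : HasDerivAt g (‖u‖ * a) ‖u‖) :
    HasGradientAt (fun v : E => g ‖v‖) (a • u) u := by
  rw [hasGradientAt_iff_hasFDerivAt]
  rcases eq_or_ne u 0 with rfl | hu
  · simpa using hasFDerivAt_comp_norm_zero (by simpa using hg)
  · refine (hg.comp_hasFDerivAt u (hasFDerivAt_norm_of_ne_zero hu)).congr_fderiv ?_
    ext y
    simp only [toDual_apply_apply, real_inner_smul_left, smul_apply, innerSL_apply_apply,
      smul_eq_mul]
    field_simp

end Radial

theorem hasDerivAt_sharp_laplace_profile {h : ℝ} (hh : h ≠ 0) (C t : ℝ) :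
    HasDerivAt (fun t : ℝ => h * (t + h) * (C * exp (-t / h))) (t * -(C * exp (-t / h))) t := by
  have hexp : HasDerivAt (fun t : ℝ => exp (-t / h)) (exp (-t / h) * (-1 / h)) t :=
    (hasDerivAt_exp _).comp t (by simpa [neg_div] using (hasDerivAt_id t).neg.div_const h)
  refine ((((hasDerivAt_id t).add_const h).const_mul h).mul (hexp.const_mul C)).congr_deriv ?_
  simp only [id]
  field_simp
  ring

theorem gradient_sharp_laplace_companion_general {d : ℕ} (h c : ℝ)
    (hh : 0 < h) :
    ∀ u : EuclideanSpace ℝ (Fin d),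
      HasGradientAt
        (fun v : EuclideanSpace ℝ (Fin d) =>
          h * (‖v‖ + h) * (c * (h ^ d)⁻¹ * Real.exp (-‖v‖ / h)))
        (-(c * (h ^ d)⁻¹ * Real.exp (-‖u‖ / h)) • u) u :=
  fun u => hasGradientAt_comp_norm (hasDerivAt_sharp_laplace_profile hh.ne' _ _)

/-- Gradient of the sharp Laplace companion kernel: for the Laplace kernel
`K_h(u) = c h^{−d} exp(−‖u‖/h)` and its companion `L_h(u) = h(‖u‖+h) K_h(u)`,
`L_h` is differentiable everywhere (including the origin) with
`∇L_h(u) = −K_h(u) • u`. -/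
theorem gradient_sharp_laplace_companion {d : ℕ} (hd : 1 ≤ d) (h c : ℝ)
    (hh : 0 < h) (hc : 0 < c) :
    ∀ u : EuclideanSpace ℝ (Fin d),
      HasGradientAt
        (fun v : EuclideanSpace ℝ (Fin d) =>
          h * (‖v‖ + h) * (c * (h ^ d)⁻¹ * Real.exp (-‖v‖ / h)))
        (-(c * (h ^ d)⁻¹ * Real.exp (-‖u‖ / h)) • u) u :=
  gradient_sharp_laplace_companion_general h c hh
end

section
/- Sharp-score representation of the Laplace mean-shift field (Lemma 6.1): for any Borel probability measure α on ℝ^d and any z ∈ ℝ^d, the function R(z) := ∫ L_h(z − y) dα(y) is differentiable with ∇R(z) = ∫ (y − z) K_h(z − y) dα(y); consequently, writing Q(z) := ∫ K_h(z − y) dα(y) > 0 and R(z) > 0, the mean-shift vector M(z) := ( ∫ (y − z) K_h(z − y) dα(y) ) / Q(z) satisfies M(z) = (R(z)/Q(z)) · ∇ log R(z); moreover R(z)/Q(z) = h ( r̄(z) + h ), where r̄(z) := ( ∫ ‖y − z‖ K_h(z − y) dα(y) ) / Q(z). -/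
/-!
Away from the origin `∇L_h(u) = -K_h(u) u` by the chain rule; at the origin the radial profile
`s ↦ h (s + h) c h⁻ᵈ e^{-s/h}` has zero slope, so `L_h` is differentiable everywhere with that
gradient. The gradient is bounded by `c h^{1-d}`, so one may differentiate under the integral
sign, which gives `∇R(z) = ∫ (y - z) K_h(z - y) dα(y)`. Since `R > 0`, the chain rule for `log R`
turns this into `M = (R / Q) ∇ log R`, and integrating `L_h(u) = h ‖u‖ K_h(u) + h² K_h(u)` gives
`R = h ∫ ‖y - z‖ K_h(z - y) dα(y) + h² Q`, i.e. `R / Q = h (r̄ + h)`.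
-/

open MeasureTheory Real InnerProductSpace

section Radial

variable {E : Type*} [NormedAddCommGroup E] [InnerProductSpace ℝ E] [CompleteSpace E]

theorem hasGradientAt_norm {x : E} (hx : x ≠ 0) : HasGradientAt (‖·‖) (‖x‖⁻¹ • x) x := by
  have hsqrt := (hasStrictFDerivAt_norm_sq x).hasFDerivAt.sqrt
    (pow_ne_zero 2 (norm_ne_zero_iff.mpr hx))
  simp only [Real.sqrt_sq (norm_nonneg _)] at hsqrt
  rw [hasGradientAt_iff_hasFDerivAt]
  refine hsqrt.congr_fderiv ?_
  ext w
  simp only [one_div, mul_inv_rev, smul_apply, coe_innerSL_apply, nsmul_eq_mul, Nat.cast_ofNat,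
    smul_eq_mul, map_smul, toDual_apply_apply]
  field_simp

/-- At `x = 0` the hypothesis says `φ'(0) = 0`, which is what makes `φ ∘ ‖·‖` differentiable
there although the norm is not. -/
theorem hasGradientAt_comp_norm_s13 {φ : ℝ → ℝ} {a : ℝ} {x : E} (hφ : HasDerivAt φ (‖x‖ * a) ‖x‖) :
    HasGradientAt (fun w => φ ‖w‖) (a • x) x := by
  rw [hasGradientAt_iff_hasFDerivAt]
  by_cases hx : x = 0
  · subst hx
    rw [norm_zero, zero_mul, hasDerivAt_iff_isLittleO_nhds_zero] at hφ
    rw [smul_zero, map_zero, hasFDerivAt_iff_isLittleO_nhds_zero]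
    simp only [zero_add, norm_zero, smul_zero, sub_zero, zero_apply] at hφ ⊢
    exact Asymptotics.isLittleO_norm_right.mp (hφ.comp_tendsto tendsto_norm_zero)
  · refine (hφ.comp_hasFDerivAt x (hasGradientAt_iff_hasFDerivAt.mp (hasGradientAt_norm hx)))
      |>.congr_fderiv ?_
    rw [← map_smul, smul_smul, mul_right_comm, mul_inv_cancel₀ (norm_ne_zero_iff.mpr hx), one_mul]

theorem HasGradientAt.log {f : E → ℝ} {f' x : E} (hf : HasGradientAt f f' x) (hx : f x ≠ 0) :
    HasGradientAt (fun y => Real.log (f y)) ((f x)⁻¹ • f') x := by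
  rw [hasGradientAt_iff_hasFDerivAt] at hf ⊢
  rw [map_smul]
  exact hf.log hx

end Radial

section ParametricIntegral

variable {E : Type*} [NormedAddCommGroup E] [InnerProductSpace ℝ E] [CompleteSpace E]
  [SecondCountableTopology E] [MeasurableSpace E] [BorelSpace E]

theorem hasGradientAt_integral_comp_sub (μ : Measure E) [IsFiniteMeasure μ] {L : E → ℝ}
    {g : E → E} (hL : ∀ u, HasGradientAt L (g u) u) {C C' : ℝ} (hLC : ∀ u, ‖L u‖ ≤ C)
    (hg : Continuous g) (hgC : ∀ u, ‖g u‖ ≤ C') (x : E) :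
    HasGradientAt (fun x => ∫ y, L (x - y) ∂μ) (∫ y, g (x - y) ∂μ) x := by
  have hLc : Continuous L := continuous_iff_continuousAt.2 fun u => (hL u).continuousAt
  have hgx : Integrable (fun y => g (x - y)) μ :=
    .of_bound (hg.comp (continuous_const.sub continuous_id)).aestronglyMeasurable C'
      (ae_of_all _ fun y => hgC _)
  have hcomm : ∫ y, toDual ℝ E (g (x - y)) ∂μ = toDual ℝ E (∫ y, g (x - y) ∂μ) :=
    (toDual ℝ E).toContinuousLinearEquiv.toContinuousLinearMap.integral_comp_commSL (by simp) hgx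
  rw [hasGradientAt_iff_hasFDerivAt, ← hcomm]
  refine hasFDerivAt_integral_of_dominated_of_fderiv_le (F := fun x y => L (x - y))
    (F' := fun x y => toDual ℝ E (g (x - y))) (bound := fun _ => C') Filter.univ_mem
    (.of_forall fun x => (hLc.comp (continuous_const.sub continuous_id)).aestronglyMeasurable)
    (.of_bound (hLc.comp (continuous_const.sub continuous_id)).aestronglyMeasurable C
      (ae_of_all _ fun y => hLC _))
    ((toDual ℝ E).continuous.comp
      (hg.comp (continuous_const.sub continuous_id))).aestronglyMeasurable
    (ae_of_all _ fun y x _ => by simpa using hgC _) (integrable_const C')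
    (ae_of_all _ fun y x _ => ?_)
  simpa [Function.comp_def] using (hL (x - y)).hasFDerivAt.comp x ((hasFDerivAt_id x).sub_const y)

end ParametricIntegral

theorem add_mul_exp_neg_div_le {h : ℝ} (hh : 0 < h) (r : ℝ) : (r + h) * exp (-r / h) ≤ h := by
  rw [neg_div, exp_neg, ← div_eq_mul_inv, div_le_iff₀ (exp_pos _)]
  calc r + h = h * (r / h + 1) := by field_simp
    _ ≤ h * exp (r / h) := by gcongr; exact add_one_le_exp _

theorem integral_pos_of_forall_pos {α : Type*} [MeasurableSpace α] {μ : Measure α} [NeZero μ]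
    {f : α → ℝ} (hf : ∀ x, 0 < f x) (hfi : Integrable f μ) : 0 < ∫ x, f x ∂μ := by
  rw [integral_pos_iff_support_of_nonneg (fun x => (hf x).le) hfi,
    Function.support_eq_univ fun x => (hf x).ne']
  exact Measure.measure_univ_pos.mpr (NeZero.ne μ)

section Laplace

variable {E : Type*} [NormedAddCommGroup E] {A h : ℝ}

noncomputable def laplaceKernel (A h : ℝ) (u : E) : ℝ := A * exp (-‖u‖ / h)

noncomputable def laplaceCompanion (A h : ℝ) (u : E) : ℝ := h * (‖u‖ + h) * laplaceKernel A h u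

theorem laplaceKernel_pos (hA : 0 < A) (u : E) : 0 < laplaceKernel A h u := by
  unfold laplaceKernel; positivity

theorem laplaceKernel_nonneg (hA : 0 ≤ A) (u : E) : 0 ≤ laplaceKernel A h u := by
  unfold laplaceKernel; positivity

theorem laplaceKernel_le (hh : 0 < h) (hA : 0 ≤ A) (u : E) : laplaceKernel A h u ≤ A := by
  unfold laplaceKernel
  exact mul_le_of_le_one_right hA <| exp_le_one_iff.mpr <|
    div_nonpos_of_nonpos_of_nonneg (neg_nonpos.mpr (norm_nonneg u)) hh.le

theorem norm_mul_laplaceKernel_le (hh : 0 < h) (hA : 0 ≤ A) (u : E) :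
    ‖u‖ * laplaceKernel A h u ≤ A * h :=
  calc ‖u‖ * laplaceKernel A h u = A * (‖u‖ * exp (-‖u‖ / h)) := by
        unfold laplaceKernel; ring
    _ ≤ A * ((‖u‖ + h) * exp (-‖u‖ / h)) := by gcongr; linarith
    _ ≤ A * h := by gcongr; exact add_mul_exp_neg_div_le hh _

theorem laplaceCompanion_le (hh : 0 < h) (hA : 0 ≤ A) (u : E) :
    laplaceCompanion A h u ≤ A * h ^ 2 :=
  calc laplaceCompanion A h u = A * h * ((‖u‖ + h) * exp (-‖u‖ / h)) := by
        unfold laplaceCompanion laplaceKernel; ring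
    _ ≤ A * h * h := by gcongr; exact add_mul_exp_neg_div_le hh _
    _ = A * h ^ 2 := by ring

@[fun_prop]
theorem continuous_laplaceKernel : Continuous (laplaceKernel A h : E → ℝ) := by
  unfold laplaceKernel; fun_prop

variable [MeasurableSpace E] [BorelSpace E] (μ : Measure E) [IsFiniteMeasure μ]

theorem integrable_laplaceKernel_comp_sub (hh : 0 < h) (hA : 0 ≤ A) (z : E) :
    Integrable (fun y => laplaceKernel A h (z - y)) μ :=
  .of_bound (Continuous.aestronglyMeasurable (by fun_prop)) A (ae_of_all _ fun y => by
    rw [Real.norm_of_nonneg (laplaceKernel_nonneg hA _)]; exact laplaceKernel_le hh hA _)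

theorem integrable_norm_sub_mul_laplaceKernel (hh : 0 < h) (hA : 0 ≤ A) (z : E) :
    Integrable (fun y => ‖y - z‖ * laplaceKernel A h (z - y)) μ :=
  .of_bound (by fun_prop) (A * h) (ae_of_all _ fun y => by
    rw [Real.norm_of_nonneg (mul_nonneg (norm_nonneg _) (laplaceKernel_nonneg hA _)), norm_sub_rev]
    exact norm_mul_laplaceKernel_le hh hA _)

theorem integral_laplaceCompanion_comp_sub (hh : 0 < h) (hA : 0 ≤ A) (z : E) :
    ∫ y, laplaceCompanion A h (z - y) ∂μ =
      h * ∫ y, ‖y - z‖ * laplaceKernel A h (z - y) ∂μ +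
        h ^ 2 * ∫ y, laplaceKernel A h (z - y) ∂μ := by
  rw [← integral_const_mul, ← integral_const_mul,
    ← integral_add ((integrable_norm_sub_mul_laplaceKernel μ hh hA z).const_mul h)
      ((integrable_laplaceKernel_comp_sub μ hh hA z).const_mul _)]
  congr 1 with y
  unfold laplaceCompanion
  rw [norm_sub_rev]
  ring

end Laplace

section LaplaceCalculus

variable {E : Type*} [NormedAddCommGroup E] [InnerProductSpace ℝ E] [CompleteSpace E] {A h : ℝ}

theorem hasGradientAt_laplaceCompanion (hh : h ≠ 0) (x : E) :
    HasGradientAt (laplaceCompanion A h) (-laplaceKernel A h x • x) x := by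
  have hφ : HasDerivAt (fun s => h * (s + h) * (A * exp (-s / h)))
      (‖x‖ * -laplaceKernel A h x) ‖x‖ := by
    refine ((((hasDerivAt_id' _).add_const h).const_mul h).mul
      ((((hasDerivAt_id' _).neg).div_const h).exp.const_mul A)).congr_deriv ?_
    unfold laplaceKernel
    field_simp
    ring
  exact hasGradientAt_comp_norm_s13 hφ

variable [SecondCountableTopology E] [MeasurableSpace E] [BorelSpace E]
  (μ : Measure E) [IsFiniteMeasure μ]

theorem hasGradientAt_integral_laplaceCompanion (hh : 0 < h) (hA : 0 ≤ A) (z : E) :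
    HasGradientAt (fun x => ∫ y, laplaceCompanion A h (x - y) ∂μ)
      (∫ y, laplaceKernel A h (z - y) • (y - z) ∂μ) z := by
  have hL_le (u : E) : ‖laplaceCompanion A h u‖ ≤ A * h ^ 2 := by
    rw [Real.norm_of_nonneg (show 0 ≤ laplaceCompanion A h u from
      mul_nonneg (by positivity) (laplaceKernel_nonneg hA u))]
    exact laplaceCompanion_le hh hA u
  have hg_le (u : E) : ‖-laplaceKernel A h u • u‖ ≤ A * h := by
    rw [norm_smul, norm_neg, Real.norm_of_nonneg (laplaceKernel_nonneg hA _), mul_comm]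
    exact norm_mul_laplaceKernel_le hh hA u
  have hg_eq : (fun y => laplaceKernel A h (z - y) • (y - z)) =
      fun y => -laplaceKernel A h (z - y) • (z - y) := by
    funext y
    rw [neg_smul, ← smul_neg, neg_sub]
  rw [hg_eq]
  exact hasGradientAt_integral_comp_sub μ (hasGradientAt_laplaceCompanion hh.ne') hL_le
    (by fun_prop) hg_le z

end LaplaceCalculus

/-- Sharp-score representation of the Laplace mean-shift field (Lemma 6.1):
`R(z) = ∫ L_h(z−y) dα(y)` is differentiable with `∇R(z) = ∫ (y−z)K_h(z−y) dα(y)`,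
the mean-shift vector satisfies `M(z) = (R(z)/Q(z)) ∇ log R(z)`, and
`R(z)/Q(z) = h(r̄(z)+h)`. -/
theorem sharp_score_representation_laplace {d : ℕ} (h c : ℝ) (hh : 0 < h) (hc : 0 < c)
    (α : Measure (EuclideanSpace ℝ (Fin d))) [IsProbabilityMeasure α]
    (Kh Lh : EuclideanSpace ℝ (Fin d) → ℝ)
    (hKh : ∀ u, Kh u = c * (h ^ d)⁻¹ * Real.exp (-‖u‖ / h))
    (hLh : ∀ u, Lh u = h * (‖u‖ + h) * Kh u)
    (R Q : EuclideanSpace ℝ (Fin d) → ℝ)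
    (hR : ∀ z, R z = ∫ y, Lh (z - y) ∂α)
    (hQ : ∀ z, Q z = ∫ y, Kh (z - y) ∂α)
    (M : EuclideanSpace ℝ (Fin d) → EuclideanSpace ℝ (Fin d))
    (hM : ∀ z, M z = (Q z)⁻¹ • ∫ y, Kh (z - y) • (y - z) ∂α)
    (rbar : EuclideanSpace ℝ (Fin d) → ℝ)
    (hrbar : ∀ z, rbar z = (∫ y, ‖y - z‖ * Kh (z - y) ∂α) / Q z) :
    ∀ z,
      HasGradientAt R (∫ y, Kh (z - y) • (y - z) ∂α) z ∧
      M z = (R z / Q z) • gradient (fun w => Real.log (R w)) z ∧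
      R z / Q z = h * (rbar z + h) := by
  intro z
  set A := c * (h ^ d)⁻¹
  have hA : 0 < A := by positivity
  obtain rfl : Kh = laplaceKernel A h := funext hKh
  obtain rfl : Lh = laplaceCompanion A h := funext hLh
  obtain rfl : R = fun x => ∫ y, laplaceCompanion A h (x - y) ∂α := funext hR
  obtain rfl : Q = fun x => ∫ y, laplaceKernel A h (x - y) ∂α := funext hQ
  dsimp only at hM hrbar ⊢
  have hQ_pos : 0 < ∫ y, laplaceKernel A h (z - y) ∂α :=
    integral_pos_of_forall_pos (fun y => laplaceKernel_pos hA _)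
      (integrable_laplaceKernel_comp_sub α hh hA.le z)
  have hR_eq := integral_laplaceCompanion_comp_sub α hh hA.le z
  have hR_pos : 0 < ∫ y, laplaceCompanion A h (z - y) ∂α := by
    have : 0 ≤ ∫ y, ‖y - z‖ * laplaceKernel A h (z - y) ∂α :=
      integral_nonneg fun y => mul_nonneg (norm_nonneg _) (laplaceKernel_nonneg hA.le _)
    rw [hR_eq]
    positivity
  have hgrad := hasGradientAt_integral_laplaceCompanion α hh hA.le z
  refine ⟨hgrad, ?_, ?_⟩
  · rw [hM, (hgrad.log hR_pos.ne').gradient, smul_smul]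
    congr 1
    field_simp
  · rw [hrbar, hR_eq]
    field_simp
end
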